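/- arXiv:2601.00958 — 3 statements merged into one kernel-verified Lean document; each statement's English description precedes it below -/
import Mathlib

section
/- Let a, b be positive integers. Define T : ℕ → ℤ by T 0 = 1, T 1 = a*b - 1, T (n+2) = (a*b - 2) * T (n+1) - T n, and U : ℝ → ℕ → ℝ the Chebyshev U-polynomials, U t 0 = 1, U t 1 = 2*t, U t (n+2) = 2*t*(U t (n+1)) - U t n. Then for all m, (T m : ℝ) = U (Real.sqrt (a*b) / 2) (2*m). -/
theorem stmt_13 (a b : ℤ) (ha : 0 < a) (hb : 0 < b) (T : ℕ → ℤ)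
    (hT0 : T 0 = 1) (hT1 : T 1 = a*b - 1)
    (hT : ∀ n, T (n+2) = (a*b - 2) * T (n+1) - T n)
    (U : ℝ → ℕ → ℝ)
    (hU0 : ∀ t, U t 0 = 1) (hU1 : ∀ t, U t 1 = 2*t)
    (hU : ∀ t n, U t (n+2) = 2*t*(U t (n+1)) - U t n) :
    ∀ m, (T m : ℝ) = U (Real.sqrt ((a : ℝ)*(b : ℝ)) / 2) (2*m) := by
  set t : ℝ := Real.sqrt ((a : ℝ)*(b : ℝ)) / 2 with ht
  have hab : (0:ℝ) ≤ (a:ℝ)*(b:ℝ) := by positivity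
  have hs : (2*t) * (2*t) = (a:ℝ)*(b:ℝ) := by
    rw [ht]; ring_nf
    rw [Real.sq_sqrt hab]
  -- even-index recurrence
  have hrec : ∀ n, U t (n+4) = ((a:ℝ)*(b:ℝ) - 2) * U t (n+2) - U t n := by
    intro n
    have h1 := hU t (n+2)
    have h2 := hU t (n+1)
    have h3 := hU t n
    rw [h1, h2, h3]
    linear_combination (2*t*U t (n+1) - U t n) * hs
  have hU2 : U t 2 = (a:ℝ)*(b:ℝ) - 1 := by
    have := hU t 0
    rw [this, hU1, hU0]; linear_combination hs
  have key : ∀ m, (T m : ℝ) = U t (2*m) ∧ (T (m+1) : ℝ) = U t (2*(m+1)) := by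
    intro m
    induction m with
    | zero =>
      constructor
      · simp [hT0, hU0]
      · show ((T 1 : ℤ) : ℝ) = U t 2
        rw [hT1, hU2]; push_cast; ring
    | succ n ih =>
      refine ⟨ih.2, ?_⟩
      have h := hrec (2*n)
      have e1 : 2*n+4 = 2*(n+1+1) := by ring
      have e2 : 2*n+2 = 2*(n+1) := by ring
      rw [e1, e2] at h
      rw [h, ← ih.1, ← ih.2, hT n]
      push_cast; ring
  exact fun m => (key m).1
end

section
/- Let x : ℕ → ℤ satisfy x 0 = 0, x 1 = 1, x (n+2) = k * x (n+1) - x n. Then for all m, n: x (m + n + 1) = x (m+1) * x (n+1) - x m * x n. -/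
theorem stmt_15 (k : ℤ) (x : ℕ → ℤ) (h0 : x 0 = 0) (h1 : x 1 = 1)
    (hrec : ∀ n, x (n+2) = k * x (n+1) - x n) :
    ∀ m n, x (m + n + 1) = x (m+1) * x (n+1) - x m * x n := by
  intro m n
  induction n using Nat.twoStepInduction with
  | zero => simp [h0, h1]
  | one =>
    have := hrec m
    have h2 := hrec 0
    simp [h0, h1] at h2
    rw [show m + 1 + 1 = m + 2 from rfl, this, h2, h1]
    ring
  | more n ih2 ih1 =>
    have e1 : m + (n + 2) + 1 = (m + n + 1) + 2 := by ring
    rw [e1, hrec, show m + n + 1 + 1 = m + (n+1) + 1 from by ring, ih2, ih1,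
      hrec (n+1), hrec n]
    ring
end

section
/- Let x : ℕ → ℤ satisfy x 0 = 0, x 1 = 1, x (n+2) = k * x (n+1) - x n. Then for all m ≥ 1 and all n, x n divides x (m * n). -/
theorem stmt_16 (k : ℤ) (x : ℕ → ℤ) (h0 : x 0 = 0) (h1 : x 1 = 1)
    (hrec : ∀ n, x (n+2) = k * x (n+1) - x n) :
    ∀ m n, 1 ≤ m → x n ∣ x (m * n) := by
  have add_formula : ∀ a b, x (a + b + 1) = x (a + 1) * x (b + 1) - x a * x b := by
    intro a
    induction a using Nat.twoStepInduction with
    | zero => intro b; simp [h0, h1]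
    | one =>
      intro b
      have h2 : x 2 = k := by rw [hrec 0, h0, h1]; ring
      have : (1 : ℕ) + b + 1 = b + 2 := by ring
      rw [this, hrec b, h2, h1]; ring
    | more a ih1 ih2 =>
      intro b
      have e1 : a + 2 + b + 1 = (a + b + 1) + 2 := by ring
      have e2 : a + 1 + b + 1 = (a + b) + 2 := by ring
      have e3 : (a + b) + 1 + 1 = a + b + 2 := by ring
      rw [e1, hrec (a + b + 1), show a + b + 1 + 1 = a + 1 + b + 1 by ring, ih2 b,
        ih1 b, show a + 2 + 1 = a + 1 + 2 by ring, hrec (a + 1), hrec a]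
      ring
  intro m n hm
  induction m with
  | zero => omega
  | succ m ih =>
    rcases Nat.eq_or_lt_of_le hm with h | h
    · simp [← h]
    · have hm' : 1 ≤ m := by omega
      have ihm := ih hm'
      cases n with
      | zero => simp
      | succ b =>
        have : (m + 1) * (b + 1) = m * (b + 1) + b + 1 := by ring
        rw [this, add_formula (m * (b + 1)) b]
        exact dvd_sub (Dvd.intro_left _ rfl) (Dvd.dvd.mul_right ihm _)
end
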